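/- Let u_1,…,u_k be an orthonormal basis of ℝ^k, let U = [u_1,…,u_d], Λ = diag(λ_1,…,λ_d) with λ_j = σ²ρ_j for distinct positive reals ρ_1,…,ρ_d, and define Ξ_i = Σ_{j≠i, 1≤j≤k} ( μ_i μ_j / (μ_i − μ_j)² ) u_j u_jᵀ where μ_j = σ²(1+ρ_j) for j ≤ d and μ_j = σ² for j > d. Then for each i ≤ d, tr( (σ²I_k + UΛUᵀ)(Ξ_i + u_i u_iᵀ) ) = σ²(1+ρ_i) [ 1 + (k−d)/ρ_i² + Σ_{j≤d, j≠i} (1+ρ_j)²/(ρ_i − ρ_j)² ]. (This is the trace computation giving the O(1/w) correction term of the post-change expected increment in the proof of the post-change increment lemma.) -/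

import Mathlib

/-!
The spiked covariance `Σ = σ²I + UΛUᵀ` acts on the orthonormal basis diagonally,
`Σ u_j = μ_j u_j`, so `tr(Σ u_ju_jᵀ) = μ_j` and the trace equals
`μ_i + Σ_{j≠i} μ_iμ_j²/(μ_i−μ_j)²`. Each summand is homogeneous of degree one in `σ²`;
factoring `σ²` out, a spike `j ≤ d` contributes `(1+ρ_i)(1+ρ_j)²/(ρ_i−ρ_j)²` and each of the
`k − d` noise directions contributes `(1+ρ_i)/ρ_i²`.
-/

open Matrix

section OrthonormalFrame

variable {ι n m R : Type*} [DecidableEq ι] [Fintype n] [CommSemiring R]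
  {u : ι → n → R} {e : m → ι} {U : Matrix n m R}

lemma transpose_mulVec_of_orthonormal (hu : ∀ i j, u i ⬝ᵥ u j = if i = j then 1 else 0)
    (hU : ∀ r c, U r c = u (e c) r) (j : ι) :
    Uᵀ *ᵥ u j = fun c => if e c = j then 1 else 0 := by
  ext c
  rw [← hu]
  simp only [mulVec, dotProduct, transpose_apply, hU]

variable [Fintype m] [DecidableEq m]

lemma mul_diagonal_mul_transpose_mulVec_self (hu : ∀ i j, u i ⬝ᵥ u j = if i = j then 1 else 0)
    (hU : ∀ r c, U r c = u (e c) r) (he : Function.Injective e) (lam : m → R) (c : m) :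
    (U * diagonal lam * Uᵀ) *ᵥ u (e c) = lam c • u (e c) := by
  have hsingle : Uᵀ *ᵥ u (e c) = Pi.single c 1 := by
    rw [transpose_mulVec_of_orthonormal hu hU]
    ext c'
    simp [he.eq_iff, Pi.single_apply, eq_comm]
  ext r
  rw [← mulVec_mulVec, ← mulVec_mulVec, hsingle]
  simp [hU, mul_comm]

lemma mul_diagonal_mul_transpose_mulVec_of_forall_ne
    (hu : ∀ i j, u i ⬝ᵥ u j = if i = j then 1 else 0)
    (hU : ∀ r c, U r c = u (e c) r) (lam : m → R) {j : ι} (hj : ∀ c, e c ≠ j) :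
    (U * diagonal lam * Uᵀ) *ᵥ u j = 0 := by
  have hzero : Uᵀ *ᵥ u j = 0 := by
    rw [transpose_mulVec_of_orthonormal hu hU]
    ext c
    simp [hj c]
  rw [← mulVec_mulVec, hzero, mulVec_zero]

end OrthonormalFrame

lemma trace_mul_vecMulVec_self_of_mulVec_eq {n R : Type*} [Fintype n] [CommSemiring R]
    {A : Matrix n n R} {v : n → R} {c : R} (hAv : A *ᵥ v = c • v) (hv : v ⬝ᵥ v = 1) :
    (A * vecMulVec v v).trace = c := by
  rw [mul_vecMulVec, trace_vecMulVec, hAv, smul_dotProduct, hv, smul_eq_mul, mul_one]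

lemma spiked_mulVec_eq {R : Type*} [CommRing R] {k d : ℕ} (hdk : d ≤ k) {σ2 : R}
    {u : Fin k → Fin k → R} (hu : ∀ i j, u i ⬝ᵥ u j = if i = j then 1 else 0)
    {ρ lam : Fin d → R} (hlam : ∀ i, lam i = σ2 * ρ i) {μ : Fin k → R}
    (hμ : ∀ j : Fin k, μ j = if h : (j : ℕ) < d then σ2 * (1 + ρ ⟨j, h⟩) else σ2)
    {U : Matrix (Fin k) (Fin d) R} (hU : ∀ r c, U r c = u (Fin.castLE hdk c) r) (j : Fin k) :
    (σ2 • (1 : Matrix (Fin k) (Fin k) R) + U * diagonal lam * Uᵀ) *ᵥ u j = μ j • u j := by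
  rw [add_mulVec, smul_mulVec, one_mulVec]
  by_cases hj : (j : ℕ) < d
  · obtain ⟨c, rfl⟩ : ∃ c : Fin d, Fin.castLE hdk c = j := ⟨⟨j, hj⟩, rfl⟩
    rw [mul_diagonal_mul_transpose_mulVec_self hu hU (Fin.castLE_injective hdk), hμ, dif_pos hj,
      hlam, ← add_smul, mul_one_add]
    rfl
  · rw [mul_diagonal_mul_transpose_mulVec_of_forall_ne hu hU lam
      (fun c hc => hj (by rw [← hc]; exact c.isLt)), add_zero, hμ, dif_neg hj]

lemma Fin.sum_univ_eq_sum_castLE_add_nsmul {M : Type*} [AddCommMonoid M] {d k : ℕ}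
    (hdk : d ≤ k) (f : Fin k → M) (C : M) (hf : ∀ j : Fin k, d ≤ j → f j = C) :
    ∑ j, f j = ∑ c, f (Fin.castLE hdk c) + (k - d) • C := by
  obtain ⟨e, rfl⟩ := Nat.exists_eq_add_of_le hdk
  have hlast : ∀ j : Fin e, f (Fin.natAdd d j) = C := fun j => hf _ (Nat.le_add_right d j)
  simp only [Fin.sum_univ_add, hlast, Finset.sum_const, Finset.card_univ, Fintype.card_fin,
    Nat.add_sub_cancel_left]
  rfl

/-- The contribution `tr(Σ · (μ_iμ_j/(μ_i−μ_j)²) u_ju_jᵀ)` of one term of `Ξ_i`, with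
`a = μ_i` and `b = μ_j`. -/
def gapWeight {K : Type*} [Field K] (a b : K) : K := a * b / (a - b) ^ 2 * b

lemma gapWeight_self {K : Type*} [Field K] (a : K) : gapWeight a a = 0 := by
  simp [gapWeight]

lemma gapWeight_mul_mul {K : Type*} [Field K] (c x y : K) :
    gapWeight (c * x) (c * y) = c * gapWeight x y := by
  rcases eq_or_ne c 0 with rfl | hc
  · simp [gapWeight]
  · rw [gapWeight, gapWeight, ← mul_sub, mul_pow]
    field_simp

lemma gapWeight_spike_spike {K : Type*} [Field K] (σ2 a b : K) :
    gapWeight (σ2 * (1 + a)) (σ2 * (1 + b)) = σ2 * ((1 + a) * ((1 + b) ^ 2 / (a - b) ^ 2)) := by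
  rw [gapWeight_mul_mul, gapWeight, add_sub_add_left_eq_sub]
  ring

lemma gapWeight_spike_noise {K : Type*} [Field K] (σ2 a : K) :
    gapWeight (σ2 * (1 + a)) σ2 = σ2 * ((1 + a) / a ^ 2) := by
  have h := gapWeight_mul_mul σ2 (1 + a) 1
  rw [mul_one] at h
  rw [h, gapWeight, add_sub_cancel_left]
  ring

theorem post_change_increment_trace_general (k d : ℕ) (hdk : d ≤ k)
    (σ2 : ℝ)
    (u : Fin k → Fin k → ℝ)
    (hu : ∀ i j : Fin k, u i ⬝ᵥ u j = if i = j then (1 : ℝ) else 0)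
    (ρ : Fin d → ℝ)
    (lam : Fin d → ℝ) (hlam : ∀ i, lam i = σ2 * ρ i)
    (μ : Fin k → ℝ)
    (hμ : ∀ j : Fin k, μ j = if h : (j : ℕ) < d then σ2 * (1 + ρ ⟨j, h⟩) else σ2)
    (U : Matrix (Fin k) (Fin d) ℝ)
    (hUdef : ∀ (r : Fin k) (j : Fin d), U r j = u (Fin.castLE hdk j) r)
    (Xi : Fin d → Matrix (Fin k) (Fin k) ℝ)
    (hXi : ∀ i : Fin d, Xi i =
      ∑ j ∈ Finset.univ.erase (Fin.castLE hdk i),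
        (μ (Fin.castLE hdk i) * μ j / (μ (Fin.castLE hdk i) - μ j) ^ 2) •
          Matrix.vecMulVec (u j) (u j))
    (i : Fin d) :
    ((σ2 • (1 : Matrix (Fin k) (Fin k) ℝ) + U * Matrix.diagonal lam * Uᵀ) *
        (Xi i + Matrix.vecMulVec (u (Fin.castLE hdk i)) (u (Fin.castLE hdk i)))).trace
      = σ2 * (1 + ρ i) *
          (1 + ((k : ℝ) - (d : ℝ)) / ρ i ^ 2
            + ∑ j ∈ Finset.univ.erase i, (1 + ρ j) ^ 2 / (ρ i - ρ j) ^ 2) := by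
  have μ_castLE : ∀ c : Fin d, μ (Fin.castLE hdk c) = σ2 * (1 + ρ c) := fun c => by
    simp [hμ]
  have trace_mul_rankOne : ∀ j, ((σ2 • (1 : Matrix (Fin k) (Fin k) ℝ) + U * diagonal lam * Uᵀ) *
      vecMulVec (u j) (u j)).trace = μ j := fun j =>
    trace_mul_vecMulVec_self_of_mulVec_eq (spiked_mulVec_eq hdk hu hlam hμ hUdef j)
      ((hu j j).trans (if_pos rfl))
  have weight_noise : ∀ j : Fin k, d ≤ j →
      gapWeight (μ (Fin.castLE hdk i)) (μ j) = σ2 * ((1 + ρ i) / ρ i ^ 2) := fun j hj => by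
    rw [μ_castLE, hμ j, dif_neg (not_lt.mpr hj), gapWeight_spike_noise]
  calc _ = ∑ j ∈ Finset.univ.erase (Fin.castLE hdk i), gapWeight (μ (Fin.castLE hdk i)) (μ j)
          + μ (Fin.castLE hdk i) := by
        simp only [mul_add, trace_add, hXi, Finset.mul_sum, trace_sum, mul_smul_comm, trace_smul,
          trace_mul_rankOne, smul_eq_mul, gapWeight]
    _ = ∑ j, gapWeight (μ (Fin.castLE hdk i)) (μ j) + μ (Fin.castLE hdk i) := by
        rw [Finset.sum_erase (f := fun j => gapWeight (μ (Fin.castLE hdk i)) (μ j)) _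
          (gapWeight_self _)]
    _ = ∑ c, σ2 * ((1 + ρ i) * ((1 + ρ c) ^ 2 / (ρ i - ρ c) ^ 2))
          + (k - d) • (σ2 * ((1 + ρ i) / ρ i ^ 2)) + σ2 * (1 + ρ i) := by
        rw [Fin.sum_univ_eq_sum_castLE_add_nsmul hdk _ _ weight_noise,
          Finset.sum_congr rfl fun c _ => by rw [μ_castLE, μ_castLE, gapWeight_spike_spike],
          μ_castLE]
    _ = _ := by
        -- the `j = i` term is `(1 + ρ i) ^ 2 / 0 = 0`
        rw [Finset.sum_erase (f := fun j => (1 + ρ j) ^ 2 / (ρ i - ρ j) ^ 2) _ (by simp),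
          ← Finset.mul_sum, ← Finset.mul_sum, nsmul_eq_mul, Nat.cast_sub hdk]
        ring

/-- Trace computation for the `O(1/w)` correction of the post-change increment:
`tr((σ²I_k + UΛUᵀ)(Ξ_i + u_iu_iᵀ))
  = σ²(1+ρ_i)[1 + (k−d)/ρ_i² + Σ_{j≤d, j≠i} (1+ρ_j)²/(ρ_i−ρ_j)²]`,
where `Ξ_i = Σ_{j≠i} (μ_iμ_j/(μ_i−μ_j)²) u_ju_jᵀ` with `μ_j = σ²(1+ρ_j)` for `j ≤ d`
and `μ_j = σ²` for `j > d`, and `λ_j = σ²ρ_j`. -/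
theorem post_change_increment_trace (k d : ℕ) (hd : 0 < d) (hdk : d ≤ k)
    (σ2 : ℝ) (hσ2 : 0 < σ2)
    (u : Fin k → Fin k → ℝ)
    (hu : ∀ i j : Fin k, u i ⬝ᵥ u j = if i = j then (1 : ℝ) else 0)
    (ρ : Fin d → ℝ) (hρ : ∀ i, 0 < ρ i) (hρinj : Function.Injective ρ)
    (lam : Fin d → ℝ) (hlam : ∀ i, lam i = σ2 * ρ i)
    (μ : Fin k → ℝ)
    (hμ : ∀ j : Fin k, μ j = if h : (j : ℕ) < d then σ2 * (1 + ρ ⟨j, h⟩) else σ2)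
    (U : Matrix (Fin k) (Fin d) ℝ)
    (hUdef : ∀ (r : Fin k) (j : Fin d), U r j = u (Fin.castLE hdk j) r)
    (Xi : Fin d → Matrix (Fin k) (Fin k) ℝ)
    (hXi : ∀ i : Fin d, Xi i =
      ∑ j ∈ Finset.univ.erase (Fin.castLE hdk i),
        (μ (Fin.castLE hdk i) * μ j / (μ (Fin.castLE hdk i) - μ j) ^ 2) •
          Matrix.vecMulVec (u j) (u j))
    (i : Fin d) :
    ((σ2 • (1 : Matrix (Fin k) (Fin k) ℝ) + U * Matrix.diagonal lam * Uᵀ) *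
        (Xi i + Matrix.vecMulVec (u (Fin.castLE hdk i)) (u (Fin.castLE hdk i)))).trace
      = σ2 * (1 + ρ i) *
          (1 + ((k : ℝ) - (d : ℝ)) / ρ i ^ 2
            + ∑ j ∈ Finset.univ.erase i, (1 + ρ j) ^ 2 / (ρ i - ρ j) ^ 2) :=
  post_change_increment_trace_general k d hdk σ2 u hu ρ lam hlam μ hμ U hUdef Xi hXi i
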